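/- arXiv:1711.00991 — 3 statements merged into one kernel-verified Lean document; each statement's English description precedes it below -/
import Mathlib

section
/- Let x_1,...,x_d be vectors in a Hilbert space H with positive definite Gram matrix. Fix j and S ⊆ [d]\{j}, and define T_j(S) = {T ⊆ [d]\{j} : P_T P_j = P_S P_j}. Then T_j(S) is closed under unions: if T_1, T_2 ∈ T_j(S) then T_1 ∪ T_2 ∈ T_j(S). -/
/-!
`P A` is self-adjoint and idempotent, hence the orthogonal projection onto
`K_A = span {x i | i ∈ A}`. If `u := P_{T₁} v = P_{T₂} v`, then `u ∈ K_{T₁} ≤ K_{T₁ ∪ T₂}` and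
`v - u` is orthogonal to both `K_{T₁}` and `K_{T₂}`, hence to `K_{T₁} ⊔ K_{T₂} = K_{T₁ ∪ T₂}`;
so `u = P_{T₁ ∪ T₂} v`. Apply this to `v = P_j y`.
-/

section

variable {𝕜 E : Type*} [RCLike 𝕜] [NormedAddCommGroup E] [InnerProductSpace 𝕜 E]

namespace Submodule

theorem starProjection_sup_apply_of_eq {K₁ K₂ : Submodule 𝕜 E} [K₁.HasOrthogonalProjection]
    [K₂.HasOrthogonalProjection] [(K₁ ⊔ K₂).HasOrthogonalProjection] {v : E}
    (h : K₁.starProjection v = K₂.starProjection v) :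
    (K₁ ⊔ K₂).starProjection v = K₁.starProjection v := by
  refine eq_starProjection_of_mem_orthogonal
    (le_sup_left (b := K₂) (K₁.starProjection_apply_mem v)) ?_
  rw [← inf_orthogonal]
  exact ⟨K₁.sub_starProjection_mem_orthogonal v, h ▸ K₂.sub_starProjection_mem_orthogonal v⟩

theorem starProjection_sup_mul_of_eq {K₁ K₂ : Submodule 𝕜 E} [K₁.HasOrthogonalProjection]
    [K₂.HasOrthogonalProjection] [(K₁ ⊔ K₂).HasOrthogonalProjection] {q r : E →L[𝕜] E}
    (h₁ : K₁.starProjection * q = r * q) (h₂ : K₂.starProjection * q = r * q) :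
    (K₁ ⊔ K₂).starProjection * q = r * q := by
  rw [← h₁]
  ext v
  exact starProjection_sup_apply_of_eq (congr($h₁ v).trans congr($h₂ v).symm)

end Submodule

theorem IsStarProjection.eq_starProjection_of_range_eq [CompleteSpace E] {p : E →L[𝕜] E}
    (hp : IsStarProjection p) {K : Submodule 𝕜 E} [K.HasOrthogonalProjection]
    (hK : LinearMap.range (p : E →ₗ[𝕜] E) = K) : p = K.starProjection :=
  (ContinuousLinearMap.IsStarProjection.ext_iff hp isStarProjection_starProjection).mpr
    (hK.trans K.range_starProjection.symm)

end

theorem stmt_6_general {H : Type*} [NormedAddCommGroup H] [InnerProductSpace ℝ H] [CompleteSpace H]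
    {d : ℕ} (x : Fin d → H)
    (P : Finset (Fin d) → H →L[ℝ] H)
    (hsa : ∀ A, IsSelfAdjoint (P A))
    (hidem : ∀ A, P A * P A = P A)
    (hrange : ∀ A : Finset (Fin d), LinearMap.range (P A : H →ₗ[ℝ] H) = Submodule.span ℝ (x '' ↑A))
    (j : Fin d) (S : Finset (Fin d))
    (T₁ T₂ : Finset (Fin d))
    (e1 : P T₁ * P {j} = P S * P {j}) (e2 : P T₂ * P {j} = P S * P {j}) :
    P (T₁ ∪ T₂) * P {j} = P S * P {j} := by
  have : ∀ A : Finset (Fin d), FiniteDimensional ℝ (Submodule.span ℝ (x '' ↑A)) :=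
    fun A ↦ FiniteDimensional.span_of_finite ℝ (A.finite_toSet.image x)
  have hP : ∀ A, P A = (Submodule.span ℝ (x '' ↑A)).starProjection := fun A ↦
    IsStarProjection.eq_starProjection_of_range_eq ⟨hidem A, hsa A⟩ (hrange A)
  have hunion : LinearMap.range (P (T₁ ∪ T₂) : H →ₗ[ℝ] H) =
      Submodule.span ℝ (x '' ↑T₁) ⊔ Submodule.span ℝ (x '' ↑T₂) := by
    rw [hrange, Finset.coe_union, Set.image_union, Submodule.span_union]
  rw [hP T₁] at e1
  rw [hP T₂] at e2
  rw [IsStarProjection.eq_starProjection_of_range_eq ⟨hidem _, hsa _⟩ hunion]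
  exact Submodule.starProjection_sup_mul_of_eq e1 e2

theorem stmt_6 {H : Type*} [NormedAddCommGroup H] [InnerProductSpace ℝ H] [CompleteSpace H]
    {d : ℕ} (x : Fin d → H)
    (hGram : (Matrix.of fun (i j : Fin d) => (inner ℝ (x i) (x j) : ℝ)).PosDef)
    (P : Finset (Fin d) → H →L[ℝ] H)
    (hsa : ∀ A, IsSelfAdjoint (P A))
    (hidem : ∀ A, P A * P A = P A)
    (hrange : ∀ A : Finset (Fin d), LinearMap.range (P A : H →ₗ[ℝ] H) = Submodule.span ℝ (x '' ↑A))
    (j : Fin d) (S : Finset (Fin d)) (hS : j ∉ S)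
    (T₁ T₂ : Finset (Fin d)) (h1 : j ∉ T₁) (h2 : j ∉ T₂)
    (e1 : P T₁ * P {j} = P S * P {j}) (e2 : P T₂ * P {j} = P S * P {j}) :
    P (T₁ ∪ T₂) * P {j} = P S * P {j} :=
  stmt_6_general x P hsa hidem hrange j S T₁ T₂ e1 e2
end

section
/- Let x_1,...,x_d be linearly independent vectors in a finite-dimensional inner product space with positive definite Gram matrix. Fix j; if T_1 and T_2 are subsets of [d]\{j} such that the orthogonal projection of x_j onto span(x_{T_1}) equals the orthogonal projection of x_j onto span(x_{T_2}), then the projection of x_j onto span(x_{T_1 ∩ T_2}) also equals this common value. -/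
/-!
By linear independence, `span (x '' (T₁ ∩ T₂)) = span (x '' T₁) ⊓ span (x '' T₂)`, so the common
projection `p` of `x j` lies in the span of `x '' (T₁ ∩ T₂)`. Since `x j - p` is orthogonal to the
larger space `span (x '' T₁)`, `p` is also the projection onto this smaller one.
-/

theorem LinearIndependent.span_image_inter {R M ι : Type*} [Ring R] [AddCommGroup M] [Module R M]
    {v : ι → M} (hv : LinearIndependent R v) (s t : Set ι) :
    Submodule.span R (v '' (s ∩ t)) = Submodule.span R (v '' s) ⊓ Submodule.span R (v '' t) := by
  refine le_antisymm (le_inf (Submodule.span_mono (Set.image_mono Set.inter_subset_left))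
    (Submodule.span_mono (Set.image_mono Set.inter_subset_right))) ?_
  rintro p ⟨hps, hpt⟩
  rw [← Set.inter_union_sdiff s t, Set.image_union, Submodule.span_union] at hps
  obtain ⟨a, ha, b, hb, rfl⟩ := Submodule.mem_sup.mp hps
  have hbt : b ∈ Submodule.span R (v '' t) := by
    simpa using Submodule.sub_mem _ hpt
      (Submodule.span_mono (Set.image_mono Set.inter_subset_right) ha)
  have hb0 : b = 0 := Submodule.disjoint_def.mp
    (hv.disjoint_span_image Set.disjoint_sdiff_left) b hb hbt
  simpa [hb0] using ha

theorem Submodule.starProjection_eq_of_le_of_mem {𝕜 E : Type*} [RCLike 𝕜]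
    [NormedAddCommGroup E] [InnerProductSpace 𝕜 E] {U V : Submodule 𝕜 E}
    [U.HasOrthogonalProjection] [V.HasOrthogonalProjection] (hUV : U ≤ V) {u : E}
    (hu : V.starProjection u ∈ U) : U.starProjection u = V.starProjection u :=
  eq_starProjection_of_mem_orthogonal hu
    (orthogonal_le hUV (sub_starProjection_mem_orthogonal u))

theorem stmt_9_general {H : Type*} [NormedAddCommGroup H] [InnerProductSpace ℝ H]
    [FiniteDimensional ℝ H]
    {d : ℕ} (x : Fin d → H) (hx : LinearIndependent ℝ x)
    (j : Fin d) (T₁ T₂ : Finset (Fin d))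
    (h : (Submodule.orthogonalProjection (Submodule.span ℝ (x '' ↑T₁)) (x j) : H)
       = (Submodule.orthogonalProjection (Submodule.span ℝ (x '' ↑T₂)) (x j) : H)) :
    (Submodule.orthogonalProjection (Submodule.span ℝ (x '' ↑(T₁ ∩ T₂))) (x j) : H)
       = (Submodule.orthogonalProjection (Submodule.span ℝ (x '' ↑T₁)) (x j) : H) := by
  set K₁ := Submodule.span ℝ (x '' ↑T₁)
  set K₂ := Submodule.span ℝ (x '' ↑T₂)
  change (Submodule.span ℝ (x '' ↑(T₁ ∩ T₂))).starProjection (x j) = K₁.starProjection (x j)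
  change K₁.starProjection (x j) = K₂.starProjection (x j) at h
  have hK : Submodule.span ℝ (x '' ↑(T₁ ∩ T₂)) = K₁ ⊓ K₂ := by
    rw [Finset.coe_inter, hx.span_image_inter]
  have hmem : K₁.starProjection (x j) ∈ K₁ ⊓ K₂ :=
    ⟨K₁.starProjection_apply_mem (x j), h ▸ K₂.starProjection_apply_mem (x j)⟩
  exact Submodule.starProjection_eq_of_le_of_mem (hK ▸ inf_le_left) (hK ▸ hmem)

theorem stmt_9 {H : Type*} [NormedAddCommGroup H] [InnerProductSpace ℝ H]
    [FiniteDimensional ℝ H]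
    {d : ℕ} (x : Fin d → H) (hx : LinearIndependent ℝ x)
    (j : Fin d) (T₁ T₂ : Finset (Fin d)) (h1 : j ∉ T₁) (h2 : j ∉ T₂)
    (h : (Submodule.orthogonalProjection (Submodule.span ℝ (x '' ↑T₁)) (x j) : H)
       = (Submodule.orthogonalProjection (Submodule.span ℝ (x '' ↑T₂)) (x j) : H)) :
    (Submodule.orthogonalProjection (Submodule.span ℝ (x '' ↑(T₁ ∩ T₂))) (x j) : H)
       = (Submodule.orthogonalProjection (Submodule.span ℝ (x '' ↑T₁)) (x j) : H) :=
  stmt_9_general x hx j T₁ T₂ h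
end

section
/- Let x_1,...,x_d be vectors in a Hilbert space with positive definite Gram matrix Σ. For distinct i, j and S ⊆ [d]\{i,j}, the determinant of the submatrix Σ_{S∪{i}, S∪{j}} is zero if and only if P_i (I − P_S) P_j = 0. -/
/-!
A column dependency of `Σ_{S∪{i},S∪{j}}` is a nonzero vector `z` in `span(x_S) ⊔ ℝ x_j`
orthogonal to `x_i` and to `span(x_S)`. Being orthogonal to `span(x_S)`, such a `z` is a
multiple of `w = (1 - P_S) x_j`, nonzero because `x_j ∉ span(x_S)`; so the determinant vanishes
iff `⟪x_i, w⟫ = 0`. On the other side, `P_i T P_j = 0` iff `⟪x_i, T x_j⟫ = 0` for every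
operator `T`, and `P_A` is the orthogonal projection onto `span(x_A)`.
-/

open Function Submodule
open scoped InnerProductSpace Matrix

section InnerProductSpace

variable {𝕜 E : Type*} [RCLike 𝕜] [NormedAddCommGroup E] [InnerProductSpace 𝕜 E]

theorem Matrix.det_of_inner_eq_zero_iff {ι : Type*} [Fintype ι] [DecidableEq ι] (u v : ι → E)
    (hv : LinearIndependent 𝕜 v) :
    (Matrix.of fun a b => ⟪u a, v b⟫_𝕜).det = 0 ↔
      ∃ z ∈ span 𝕜 (Set.range v), z ≠ 0 ∧ ∀ a, ⟪u a, z⟫_𝕜 = 0 := by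
  have hmulVec (c : ι → 𝕜) :
      (Matrix.of fun a b => ⟪u a, v b⟫_𝕜) *ᵥ c = fun a => ⟪u a, ∑ b, c b • v b⟫_𝕜 := by
    ext a
    simp [Matrix.mulVec, dotProduct, inner_sum, inner_smul_right, mul_comm]
  rw [← Matrix.exists_mulVec_eq_zero_iff]
  simp only [mem_span_range_iff_exists_fun, hmulVec, funext_iff, Pi.zero_apply]
  constructor
  · rintro ⟨c, hc, hcu⟩
    exact ⟨_, ⟨c, rfl⟩, fun h => hc (funext (Fintype.linearIndependent_iff.mp hv c h)), hcu⟩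
  · rintro ⟨_, ⟨c, rfl⟩, hz, hzu⟩
    exact ⟨c, fun h => hz (by simp [h]), hzu⟩

theorem Submodule.mem_orthogonal_span_iff {s : Set E} {z : E} :
    z ∈ (span 𝕜 s)ᗮ ↔ ∀ u ∈ s, ⟪u, z⟫_𝕜 = 0 := by
  rw [← span_singleton_le_iff_mem, ← isOrtho_iff_le, isOrtho_comm, isOrtho_span]
  simp

theorem starProjection_span_singleton_mul_mul_starProjection_span_singleton_eq_zero_iff
    (u v : E) (T : E →L[𝕜] E) :
    (𝕜 ∙ u).starProjection * T * (𝕜 ∙ v).starProjection = 0 ↔ ⟪u, T v⟫_𝕜 = 0 := by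
  simp only [ContinuousLinearMap.ext_iff, mul_apply_eq_comp, zero_apply,
    starProjection_apply_eq_zero_iff, mem_orthogonal_singleton_iff_inner_right]
  constructor
  · intro h
    simpa [starProjection_eq_self_iff.mpr (mem_span_singleton_self v)] using h v
  · intro h y
    obtain ⟨t, ht⟩ := mem_span_singleton.mp ((𝕜 ∙ v).starProjection_apply_mem y)
    rw [← ht, map_smul, inner_smul_right, h, mul_zero]

theorem inner_starProjection_orthogonal_eq_zero_iff (K : Submodule 𝕜 E)
    [K.HasOrthogonalProjection] {e : E} (he : e ∉ K) (f : E) :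
    ⟪f, Kᗮ.starProjection e⟫_𝕜 = 0 ↔ ∃ z ∈ K ⊔ 𝕜 ∙ e, z ≠ 0 ∧ z ∈ Kᗮ ∧ ⟪f, z⟫_𝕜 = 0 := by
  constructor
  · intro h
    refine ⟨Kᗮ.starProjection e, ?_, ?_, Kᗮ.starProjection_apply_mem e, h⟩
    · rw [starProjection_orthogonal', sub_apply, one_apply_eq_self, sub_eq_neg_add]
      exact add_mem_sup (neg_mem (K.starProjection_apply_mem e)) (mem_span_singleton_self e)
    · rwa [Ne, starProjection_apply_eq_zero_iff, orthogonal_orthogonal]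
  · rintro ⟨z, hz, hz0, hzK, hfz⟩
    obtain ⟨k, hk, _, he', rfl⟩ := mem_sup.mp hz
    obtain ⟨t, rfl⟩ := mem_span_singleton.mp he'
    have hz_eq : k + t • e = t • Kᗮ.starProjection e := by
      rw [← starProjection_eq_self_iff.mpr hzK, map_add, map_smul,
        starProjection_orthogonal_apply_eq_zero hk, zero_add]
    rw [hz_eq, inner_smul_right] at hfz
    rw [hz_eq] at hz0
    exact (mul_eq_zero.mp hfz).resolve_left fun ht => hz0 (by simp [ht])

end InnerProductSpace

section ReplaceInsert

variable {ι : Type*} [DecidableEq ι] {i j : ι} {S : Finset ι}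

/-- Relabels `S ∪ {i}` as `S ∪ {j}`, sending `i` to `j`: this is how the columns of
`Σ_{S∪{i},S∪{j}}` are indexed by its rows. -/
def Finset.replaceInsert (i j : ι) (S : Finset ι) : ↥(insert i S) → ι :=
  fun b => if (b : ι) = i then j else b

theorem Finset.replaceInsert_injective (hjS : j ∉ S) : Injective (S.replaceInsert i j) := by
  intro a b hab
  simp only [Finset.replaceInsert] at hab
  split_ifs at hab with ha hb hb
  · exact Subtype.ext (ha.trans hb.symm)
  · exact absurd (hab ▸ Finset.mem_of_mem_insert_of_ne b.2 hb) hjS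
  · exact absurd (hab ▸ Finset.mem_of_mem_insert_of_ne a.2 ha) hjS
  · exact Subtype.ext hab

variable {𝕜 E : Type*} [RCLike 𝕜] [NormedAddCommGroup E] [InnerProductSpace 𝕜 E]

theorem span_range_comp_replaceInsert (x : ι → E) (hiS : i ∉ S) :
    span 𝕜 (Set.range (x ∘ S.replaceInsert i j)) = span 𝕜 (x '' S) ⊔ 𝕜 ∙ x j := by
  refine le_antisymm (span_le.mpr ?_) (sup_le (span_le.mpr ?_) ?_)
  · rintro _ ⟨b, rfl⟩
    by_cases hb : (b : ι) = i
    · simp only [comp_apply, Finset.replaceInsert, if_pos hb]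
      exact mem_sup_right (mem_span_singleton_self _)
    · simp only [comp_apply, Finset.replaceInsert, if_neg hb]
      exact mem_sup_left (subset_span ⟨b, Finset.mem_of_mem_insert_of_ne b.2 hb, rfl⟩)
  · rintro _ ⟨s, hs, rfl⟩
    refine subset_span ⟨⟨s, Finset.mem_insert_of_mem hs⟩, ?_⟩
    simp [Finset.replaceInsert, ne_of_mem_of_not_mem hs hiS]
  · rw [span_singleton_le_iff_mem]
    exact subset_span ⟨⟨i, Finset.mem_insert_self i S⟩, by simp [Finset.replaceInsert]⟩

theorem forall_inner_insert_eq_zero_iff (x : ι → E) (z : E) :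
    (∀ a : ↥(insert i S), ⟪x a, z⟫_𝕜 = 0) ↔ z ∈ (span 𝕜 (x '' S))ᗮ ∧ ⟪x i, z⟫_𝕜 = 0 := by
  simp only [Subtype.forall, Finset.forall_mem_insert]
  rw [mem_orthogonal_span_iff, Set.forall_mem_image]
  exact and_comm

end ReplaceInsert

theorem stmt_11_general {H : Type*} [NormedAddCommGroup H] [InnerProductSpace ℝ H] [CompleteSpace H]
    {d : ℕ} (x : Fin d → H)
    (hGram : (Matrix.of fun (i j : Fin d) => (inner ℝ (x i) (x j) : ℝ)).PosDef)
    (P : Finset (Fin d) → H →L[ℝ] H)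
    (hsa : ∀ A, IsSelfAdjoint (P A))
    (hidem : ∀ A, P A * P A = P A)
    (hrange : ∀ A : Finset (Fin d), LinearMap.range (P A : H →ₗ[ℝ] H) = Submodule.span ℝ (x '' ↑A))
    (i j : Fin d) (S : Finset (Fin d)) (hiS : i ∉ S) (hjS : j ∉ S) :
    (Matrix.of fun (a b : ↥(insert i S)) =>
        (inner ℝ (x (a : Fin d)) (x (if (b : Fin d) = i then j else (b : Fin d))) : ℝ)).det = 0 ↔
      P {i} * (1 - P S) * P {j} = 0 := by
  have hx : LinearIndependent ℝ x := Matrix.linearIndependent_of_posDef_gram hGram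
  have hP (A : Finset (Fin d)) (K : Submodule ℝ H) [K.HasOrthogonalProjection]
      (hK : span ℝ (x '' A) = K) : P A = K.starProjection :=
    ContinuousLinearMap.IsStarProjection.ext ⟨hidem A, hsa A⟩ isStarProjection_starProjection
      (by rw [range_starProjection, ← hK]; exact hrange A)
  have : FiniteDimensional ℝ (span ℝ (x '' S)) := FiniteDimensional.span_of_finite ℝ (S.finite_toSet.image x)
  refine (Matrix.det_of_inner_eq_zero_iff (fun a : ↥(insert i S) => x a)
    (x ∘ S.replaceInsert i j) (hx.comp _ (Finset.replaceInsert_injective hjS))).trans ?_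
  rw [span_range_comp_replaceInsert x hiS, hP {i} (ℝ ∙ x i) (by simp),
    hP {j} (ℝ ∙ x j) (by simp), hP S _ rfl,
    starProjection_span_singleton_mul_mul_starProjection_span_singleton_eq_zero_iff,
    ← starProjection_orthogonal',
    inner_starProjection_orthogonal_eq_zero_iff _ (hx.notMem_span_image hjS)]
  simp only [forall_inner_insert_eq_zero_iff]

theorem stmt_11 {H : Type*} [NormedAddCommGroup H] [InnerProductSpace ℝ H] [CompleteSpace H]
    {d : ℕ} (x : Fin d → H)
    (hGram : (Matrix.of fun (i j : Fin d) => (inner ℝ (x i) (x j) : ℝ)).PosDef)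
    (P : Finset (Fin d) → H →L[ℝ] H)
    (hsa : ∀ A, IsSelfAdjoint (P A))
    (hidem : ∀ A, P A * P A = P A)
    (hrange : ∀ A : Finset (Fin d), LinearMap.range (P A : H →ₗ[ℝ] H) = Submodule.span ℝ (x '' ↑A))
    (i j : Fin d) (hij : i ≠ j) (S : Finset (Fin d)) (hiS : i ∉ S) (hjS : j ∉ S) :
    (Matrix.of fun (a b : ↥(insert i S)) =>
        (inner ℝ (x (a : Fin d)) (x (if (b : Fin d) = i then j else (b : Fin d))) : ℝ)).det = 0 ↔
      P {i} * (1 - P S) * P {j} = 0 :=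
  stmt_11_general x hGram P hsa hidem hrange i j S hiS hjS
end
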